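/- The 3x3 Hankel determinant hypersurface in P^4 (the secant variety of the rational normal quartic) is singular precisely along the rational normal quartic curve, i.e. along the locus where the Hankel matrix has rank at most 1. -/

import Mathlib

/-!
STATEMENT 6: The cubic hypersurface X ⊂ ℙ⁴ defined by the determinant F of the 3×3 Hankel
matrix ((Z₀,Z₁,Z₂),(Z₁,Z₂,Z₃),(Z₂,Z₃,Z₄)) (the secant variety of the rational normal
quartic) is singular precisely along the rational normal quartic curve, i.e. along the locus
where the Hankel matrix has rank at most 1.  Stated on the affine cone: for nonzero z ∈ ℂ⁵,
all partial derivatives of F vanish at z iff rank(hankel z) ≤ 1, iff z lies on the cone over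
the rational normal quartic.
-/

open MvPolynomial

/-- The 3×3 Hankel matrix of z ∈ ℂ⁵. -/
def hankel (z : Fin 5 → ℂ) : Matrix (Fin 3) (Fin 3) ℂ :=
  fun i j => z ⟨i.1 + j.1, by omega⟩

/-- The 3×3 Hankel matrix of the coordinate polynomials on ℂ⁵. -/
noncomputable def hankelPoly : Matrix (Fin 3) (Fin 3) (MvPolynomial (Fin 5) ℂ) :=
  fun i j => MvPolynomial.X ⟨i.1 + j.1, by omega⟩

/-- The affine cone over the rational normal quartic. -/
def rnqCone (p : ℂ × ℂ) : Fin 5 → ℂ :=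
  fun i => p.1 ^ (4 - i.1) * p.2 ^ i.1

/-!
By Jacobi's formula, `∂F/∂Zₖ` is the sum of the cofactors of the Hankel matrix along its `k`-th
antidiagonal, so the five partials are combinations of the six distinct 2×2 minors, and
conversely they cut out the same locus. A rank-one matrix has vanishing 2×2 minors, and vanishing
minors force `z` to be geometric, `zₖ = z₀ tᵏ` (or supported on `z₄` when `z₀ = 0`), i.e. to lie
on the cone over the rational normal quartic; there the Hankel matrix is an outer product `v wᵀ`,
hence of rank at most one.
-/

theorem Matrix.det_submatrix_eq_zero_of_rank_lt {K m n o : Type*} [Field K] [Fintype n]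
    [Fintype o] [DecidableEq o] {A : Matrix m n K} (r : o → m) (c : o → n)
    (hA : A.rank < Fintype.card o) : (A.submatrix r c).det = 0 := by
  by_contra h
  have hunit : IsUnit (A.submatrix r c) := by
    rwa [Matrix.isUnit_iff_isUnit_det, isUnit_iff_ne_zero]
  exact (Matrix.rank_of_isUnit _ hunit ▸ A.rank_submatrix_le r c).not_gt hA

/-- `hankel z` is symmetric, so its nine 2×2 minors reduce to these six. -/
def HankelMinorsVanish (z : Fin 5 → ℂ) : Prop :=
  z 0 * z 2 = z 1 * z 1 ∧ z 0 * z 3 = z 1 * z 2 ∧ z 1 * z 3 = z 2 * z 2 ∧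
    z 0 * z 4 = z 2 * z 2 ∧ z 1 * z 4 = z 2 * z 3 ∧ z 2 * z 4 = z 3 * z 3

theorem eval_pderiv_hankelPoly_det (z : Fin 5 → ℂ) (i : Fin 5) :
    eval z (pderiv i hankelPoly.det) =
      ![z 2 * z 4 - z 3 ^ 2, 2 * (z 2 * z 3 - z 1 * z 4), z 0 * z 4 + 2 * z 1 * z 3 - 3 * z 2 ^ 2,
        2 * (z 1 * z 2 - z 0 * z 3), z 0 * z 2 - z 1 ^ 2] i := by
  rw [Matrix.det_fin_three]
  fin_cases i <;> simp [hankelPoly, pderiv_X] <;> ring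

theorem eval_pderiv_hankelPoly_det_eq_zero_iff (z : Fin 5 → ℂ) :
    (∀ i, eval z (pderiv i hankelPoly.det) = 0) ↔ HankelMinorsVanish z := by
  simp only [eval_pderiv_hankelPoly_det, Fin.forall_fin_succ, Matrix.cons_val_zero,
    Matrix.cons_val_succ, Matrix.cons_val_fin_one, mul_eq_zero, two_ne_zero, false_or, forall_const]
  unfold HankelMinorsVanish
  constructor
  · rintro ⟨g0, g1, g2, g3, g4⟩
    -- `z₁z₃ - z₂²` is not a combination of the partials, but its square is.
    have h13 : z 1 * z 3 = z 2 * z 2 := by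
      have : (z 1 * z 3 - z 2 * z 2) ^ 2 = 0 := by
        linear_combination z 3 * (-z 3 * g4 - z 2 * g3) - z 2 * (z 2 * g2 - z 0 * g0 + z 3 * g3) / 3
      exact sub_eq_zero.mp (pow_eq_zero_iff two_ne_zero |>.mp this)
    exact ⟨by linear_combination g4, by linear_combination -g3, h13,
      by linear_combination g2 - 2 * h13, by linear_combination -g1, by linear_combination g0⟩
  · rintro ⟨h02, h03, h13, h04, h14, h24⟩
    exact ⟨by linear_combination h24, by linear_combination -h14,
      by linear_combination h04 + 2 * h13, by linear_combination -h03, by linear_combination h02⟩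

theorem hankelMinorsVanish_of_rank_le_one {z : Fin 5 → ℂ} (h : (hankel z).rank ≤ 1) :
    HankelMinorsVanish z := by
  have minor (r r' c c' : Fin 3) :
      hankel z r c * hankel z r' c' - hankel z r c' * hankel z r' c = 0 := by
    have := (hankel z).det_submatrix_eq_zero_of_rank_lt ![r, r'] ![c, c'] (by simpa using h)
    rwa [Matrix.det_fin_two] at this
  exact ⟨sub_eq_zero.mp (minor 0 1 0 1), sub_eq_zero.mp (minor 0 2 0 1),
    sub_eq_zero.mp (minor 0 1 1 2), sub_eq_zero.mp (minor 0 2 0 2),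
    sub_eq_zero.mp (minor 0 2 1 2), sub_eq_zero.mp (minor 1 2 1 2)⟩

theorem exists_eq_smul_rnqCone_of_hankelMinorsVanish {z : Fin 5 → ℂ} (h : HankelMinorsVanish z) :
    ∃ (p : ℂ × ℂ) (a : ℂ), z = a • rnqCone p := by
  obtain ⟨h02, h03, h13, h04, -, h24⟩ := h
  by_cases h0 : z 0 = 0
  · have h1 : z 1 = 0 := by simpa [h0] using h02.symm
    have h2 : z 2 = 0 := by simpa [h1] using h13.symm
    have h3 : z 3 = 0 := by simpa [h2] using h24.symm
    refine ⟨(0, 1), z 4, funext fun i => ?_⟩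
    fin_cases i <;> simp [rnqCone, h0, h1, h2, h3]
  · refine ⟨(1, z 1 / z 0), z 0, funext fun i => ?_⟩
    fin_cases i <;>
      simp only [Pi.smul_apply, smul_eq_mul, rnqCone, Fin.isValue, Fin.zero_eta, Fin.mk_one,
        Fin.reduceFinMk, Fin.coe_ofNat_eq_mod, Nat.reduceMod, Nat.reduceSub, one_pow, one_mul,
        mul_one, pow_zero, pow_one] <;> field_simp
    · linear_combination h02
    · linear_combination z 0 * h03 + z 1 * h02
    · linear_combination z 0 ^ 2 * h04 + (z 0 * z 2 + z 1 * z 1) * h02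

theorem hankel_smul_rnqCone (p : ℂ × ℂ) (a : ℂ) :
    hankel (a • rnqCone p) = Matrix.vecMulVec (fun i => a * p.1 ^ (2 - i.1) * p.2 ^ i.1)
      (fun j => p.1 ^ (2 - j.1) * p.2 ^ j.1) := by
  ext i j
  fin_cases i <;> fin_cases j <;> simp [hankel, rnqCone, Matrix.vecMulVec_apply] <;> ring

theorem singular_locus_of_hankel_cubic_general (z : Fin 5 → ℂ) :
    ((∀ i : Fin 5, MvPolynomial.eval z (MvPolynomial.pderiv i hankelPoly.det) = 0) ↔
      (hankel z).rank ≤ 1) ∧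
    ((hankel z).rank ≤ 1 ↔ ∃ (p : ℂ × ℂ) (a : ℂ), z = a • rnqCone p) := by
  have rank_iff_cone : (hankel z).rank ≤ 1 ↔ ∃ (p : ℂ × ℂ) (a : ℂ), z = a • rnqCone p := by
    refine ⟨fun h ↦ exists_eq_smul_rnqCone_of_hankelMinorsVanish
      (hankelMinorsVanish_of_rank_le_one h), ?_⟩
    rintro ⟨p, a, rfl⟩
    exact hankel_smul_rnqCone p a ▸ Matrix.rank_vecMulVec_le _ _
  have rank_iff_minors : (hankel z).rank ≤ 1 ↔ HankelMinorsVanish z :=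
    ⟨hankelMinorsVanish_of_rank_le_one, fun h ↦
      rank_iff_cone.mpr (exists_eq_smul_rnqCone_of_hankelMinorsVanish h)⟩
  exact ⟨(eval_pderiv_hankelPoly_det_eq_zero_iff z).trans rank_iff_minors.symm, rank_iff_cone⟩

theorem singular_locus_of_hankel_cubic (z : Fin 5 → ℂ) (hz : z ≠ 0) :
    ((∀ i : Fin 5, MvPolynomial.eval z (MvPolynomial.pderiv i hankelPoly.det) = 0) ↔
      (hankel z).rank ≤ 1) ∧
    ((hankel z).rank ≤ 1 ↔ ∃ (p : ℂ × ℂ) (a : ℂ), z = a • rnqCone p) :=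
  singular_locus_of_hankel_cubic_general z
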